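/- For every path graph P on n ≥ 1 vertices there exists a subset L_P ⊆ V(P) such that the graft (P, L_P) has a local complementation minor (P', L_{P'}) in which P' consists of a single isolated vertex and L_{P'} = ∅. Moreover, for n ≥ 2 one may take L_P = {v_1, v_n}, the set of the two leaves of the path, and obtain this minor by performing local complementation deletions successively at v_1, v_2, …, v_{n−1}. -/

import Mathlib

open scoped Classical symmDiff

/-- Local complementation of a simple graph at a vertex `v`: toggle the adjacency
between every pair of distinct neighbours of `v`. -/
def SimpleGraph.localComp {V : Type*} (G : SimpleGraph V) (v : V) : SimpleGraph V where
  Adj u w := u ≠ w ∧ (Xor' (G.Adj u w) (G.Adj v u ∧ G.Adj v w))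
  symm := ⟨by
    rintro u w ⟨h1, h2⟩
    refine ⟨h1.symm, ?_⟩
    rw [G.adj_comm w u, and_comm]
    exact h2⟩
  loopless := ⟨fun u h => h.1 rfl⟩

/-- Local complementation deletion `G ⊟ v`, keeping the ambient vertex type
(the deleted vertex becomes isolated). -/
def SimpleGraph.lcdel {V : Type*} (G : SimpleGraph V) (v : V) : SimpleGraph V where
  Adj u w := u ≠ v ∧ w ≠ v ∧ (G.localComp v).Adj u w
  symm := ⟨fun u w h => ⟨h.2.1, h.1, (G.localComp v).adj_symm h.2.2⟩⟩
  loopless := ⟨fun u h => (G.localComp v).loopless.irrefl u h.2.2⟩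

/-- A graft: a simple graph whose edges lie inside a finite support, together with
a marked set of vertices `L ⊆ support`. -/
structure Graft (V : Type*) where
  support : Finset V
  G : SimpleGraph V
  edge_mem : ∀ ⦃u w : V⦄, G.Adj u w → u ∈ support
  L : Finset V
  L_sub : L ⊆ support

variable {V : Type*} [Fintype V] [DecidableEq V]

/-- Local complementation deletion of a graft at a vertex:
`(G, L) ⊟ v = (G ⊟ v, (L \ {v}) ∆ N_G(v))`. -/
noncomputable def Graft.lcd (Γ : Graft V) (v : V) : Graft V where
  support := Γ.support.erase v
  G := Γ.G.lcdel v
  edge_mem := by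
    intro u w h
    obtain ⟨hu, hw, hne, hx⟩ := h
    refine Finset.mem_erase.mpr ⟨hu, ?_⟩
    rcases (hx : (Γ.G.Adj u w ∧ ¬(Γ.G.Adj v u ∧ Γ.G.Adj v w)) ∨
        ((Γ.G.Adj v u ∧ Γ.G.Adj v w) ∧ ¬Γ.G.Adj u w)) with ⟨ha, -⟩ | ⟨⟨hv1, -⟩, -⟩
    · exact Γ.edge_mem ha
    · exact Γ.edge_mem (Γ.G.adj_symm hv1)
  L := (Γ.L.erase v) ∆ (Finset.univ.filter fun u => Γ.G.Adj v u)
  L_sub := by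
    intro u hu
    rw [Finset.mem_symmDiff] at hu
    refine Finset.mem_erase.mpr ?_
    rcases hu with ⟨h1, -⟩ | ⟨h2, -⟩
    · exact ⟨(Finset.mem_erase.mp h1).1, Γ.L_sub (Finset.mem_erase.mp h1).2⟩
    · have hadj : Γ.G.Adj v u := (Finset.mem_filter.mp h2).2
      exact ⟨fun h => Γ.G.loopless.irrefl v (h ▸ hadj), Γ.edge_mem (Γ.G.adj_symm hadj)⟩

/-- `Δ` is a local complementation minor of `Γ`: it is obtained from `Γ` by a
finite sequence of local complementation deletions, each performed at a vertex
of the current mark set. -/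
inductive Graft.IsLCMinor : Graft V → Graft V → Prop
  | refl (Γ : Graft V) : Graft.IsLCMinor Γ Γ
  | step {Γ Δ : Graft V} (v : V) (hv : v ∈ Γ.L) :
      Graft.IsLCMinor (Γ.lcd v) Δ → Graft.IsLCMinor Γ Δ

/-- The adjacency matrix over GF(2) of a graft, indexed by its support. -/
noncomputable def Graft.matrix (Γ : Graft V) :
    Matrix Γ.support Γ.support (ZMod 2) := fun u w =>
  if (u : V) = (w : V) then (if (u : V) ∈ Γ.L then 1 else 0)
  else (if Γ.G.Adj (u : V) (w : V) then 1 else 0)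

/-- The corank over GF(2) of the adjacency matrix of a graft. -/
noncomputable def Graft.corank (Γ : Graft V) : ℕ :=
  Γ.support.card - Γ.matrix.rank

/-- The graft on the path graph `P_n` (full support) with mark set `L`. -/
noncomputable def pathGraft (n : ℕ) (L : Finset (Fin n)) : Graft (Fin n) :=
  ⟨Finset.univ, SimpleGraph.pathGraph n, fun u _ _ => Finset.mem_univ u, L,
    Finset.subset_univ L⟩

/-!
Mark both leaves of the path `v₀ ⋯ v_{n-1}` and delete `v₀`. A leaf has a single
neighbour, so local complementation at it changes nothing and deleting it leaves the path
`v₁ ⋯ v_{n-1}`; the mark set becomes `{v_{n-1}} ∆ {v₁}`, again the two leaves of that path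
(and empty once `v₁ = v_{n-1}`). After `n - 1` such steps a single unmarked vertex is left.
-/

theorem Graft.ext {W : Type*} {Γ Δ : Graft W} (hsupport : Γ.support = Δ.support)
    (hG : Γ.G = Δ.G) (hL : Γ.L = Δ.L) : Γ = Δ := by
  cases Γ; cases Δ
  subst hsupport hG hL
  rfl

theorem SimpleGraph.lcdel_adj {W : Type*} (G : SimpleGraph W) (v u w : W) :
    (G.lcdel v).Adj u w ↔ u ≠ v ∧ w ≠ v ∧ u ≠ w ∧ Xor (G.Adj u w) (G.Adj v u ∧ G.Adj v w) :=
  Iff.rfl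

namespace Graft

theorem foldl_lcd_ofFn {m : ℕ} (Γ : ℕ → Graft V) (f : Fin m → V)
    (hstep : ∀ i : Fin m, (Γ i).lcd (f i) = Γ (i + 1)) :
    (List.ofFn f).foldl lcd (Γ 0) = Γ m := by
  induction m generalizing Γ with
  | zero => rfl
  | succ m ih =>
    rw [List.ofFn_succ, List.foldl_cons, show (Γ 0).lcd (f 0) = Γ 1 from hstep 0]
    exact ih (fun k => Γ (k + 1)) (fun i => f i.succ) fun i => hstep i.succ

theorem isLCMinor_of_lcd_chain {m : ℕ} (Γ : ℕ → Graft V) (f : Fin m → V)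
    (hmem : ∀ i : Fin m, f i ∈ (Γ i).L) (hstep : ∀ i : Fin m, (Γ i).lcd (f i) = Γ (i + 1)) :
    (Γ 0).IsLCMinor (Γ m) := by
  induction m generalizing Γ with
  | zero => exact .refl _
  | succ m ih =>
    refine .step (f 0) (hmem 0) ?_
    rw [show (Γ 0).lcd (f 0) = Γ 1 from hstep 0]
    exact ih (fun k => Γ (k + 1)) (fun i => f i.succ) (fun i => hmem i.succ)
      fun i => hstep i.succ

end Graft

def tailPathGraph (n k : ℕ) : SimpleGraph (Fin n) where
  Adj u w := k ≤ u ∧ k ≤ w ∧ (SimpleGraph.pathGraph n).Adj u w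
  symm := ⟨fun _ _ ⟨hu, hw, h⟩ => ⟨hw, hu, h.symm⟩⟩
  loopless := ⟨fun _ h => h.2.2.ne rfl⟩

theorem tailPathGraph_adj {n k : ℕ} {u w : Fin n} :
    (tailPathGraph n k).Adj u w ↔ k ≤ u ∧ k ≤ w ∧ ((u : ℕ) + 1 = w ∨ (w : ℕ) + 1 = u) := by
  rw [← SimpleGraph.pathGraph_adj]
  rfl

/-- The graft reached from the path with both leaves marked after deleting `v₀, …, v_{k-1}`:
the path `v_k ⋯ v_{n-1}` with its two leaves marked, unless only one vertex is left. -/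
noncomputable def tailPathGraft (n k : ℕ) : Graft (Fin n) where
  support := {i | k ≤ (i : ℕ)}
  G := tailPathGraph n k
  edge_mem _ _ h := Finset.mem_filter.mpr ⟨Finset.mem_univ _, h.1⟩
  L := {i | k + 1 < n ∧ ((i : ℕ) = k ∨ (i : ℕ) = n - 1)}
  L_sub _ := by simp only [Finset.mem_filter, Finset.mem_univ, true_and]; omega

theorem tailPathGraft_lcd {n k : ℕ} {v : Fin n} (hv : (v : ℕ) = k) (hk : k + 1 < n) :
    (tailPathGraft n k).lcd v = tailPathGraft n (k + 1) := by
  refine Graft.ext ?_ ?_ ?_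
  · ext i
    simp only [tailPathGraft, Graft.lcd, Finset.mem_erase, Finset.mem_filter, Finset.mem_univ,
      true_and, ne_eq, Fin.ext_iff]
    omega
  · ext u w
    simp only [tailPathGraft, Graft.lcd, SimpleGraph.lcdel_adj, tailPathGraph_adj, xor_def,
      Fin.ext_iff, ne_eq]
    omega
  · ext i
    simp only [tailPathGraft, Graft.lcd, Finset.mem_symmDiff, Finset.mem_erase,
      Finset.mem_filter, Finset.mem_univ, true_and, tailPathGraph_adj, Fin.ext_iff, ne_eq]
    omega

theorem mem_tailPathGraft_L {n k : ℕ} {v : Fin n} (hv : (v : ℕ) = k) (hk : k + 1 < n) :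
    v ∈ (tailPathGraft n k).L := by
  simp [tailPathGraft, hv, hk]

theorem tailPathGraft_lcd_castLE (n : ℕ) (i : Fin (n - 1)) :
    (tailPathGraft n i).lcd (i.castLE (Nat.sub_le n 1)) = tailPathGraft n (i + 1) :=
  tailPathGraft_lcd (Fin.val_castLE _ _) (by omega)

theorem foldl_lcd_tailPathGraft (n : ℕ) :
    (List.ofFn fun i : Fin (n - 1) => Fin.castLE (Nat.sub_le n 1) i).foldl Graft.lcd
      (tailPathGraft n 0) = tailPathGraft n (n - 1) :=
  Graft.foldl_lcd_ofFn (tailPathGraft n) _ (tailPathGraft_lcd_castLE n)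

theorem tailPathGraft_isLCMinor (n : ℕ) :
    (tailPathGraft n 0).IsLCMinor (tailPathGraft n (n - 1)) :=
  Graft.isLCMinor_of_lcd_chain (tailPathGraft n) _
    (fun i => mem_tailPathGraft_L (Fin.val_castLE _ _) (by omega)) (tailPathGraft_lcd_castLE n)

theorem pathGraft_tailPathGraft_zero_L (n : ℕ) :
    pathGraft n (tailPathGraft n 0).L = tailPathGraft n 0 := by
  refine Graft.ext ?_ ?_ rfl
  · ext i
    simp [pathGraft, tailPathGraft]
  · ext u w
    simp [pathGraft, tailPathGraft, tailPathGraph]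

theorem tailPathGraft_zero_L {n : ℕ} (h : 2 ≤ n) :
    (tailPathGraft n 0).L = {⟨0, zero_lt_two.trans_le h⟩, ⟨n - 1, Nat.sub_one_lt_of_lt h⟩} := by
  ext i
  simp only [tailPathGraft, Finset.mem_filter, Finset.mem_univ, true_and, Finset.mem_insert,
    Finset.mem_singleton, Fin.ext_iff]
  omega

theorem tailPathGraft_last_support {n : ℕ} (hn : 1 ≤ n) :
    (tailPathGraft n (n - 1)).support = {⟨n - 1, Nat.sub_one_lt_of_lt hn⟩} := by
  ext i
  simp only [tailPathGraft, Finset.mem_filter, Finset.mem_univ, true_and,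
    Finset.mem_singleton, Fin.ext_iff]
  omega

theorem tailPathGraft_last_L (n : ℕ) : (tailPathGraft n (n - 1)).L = ∅ := by
  ext i
  simp only [tailPathGraft, Finset.mem_filter, Finset.mem_univ, true_and,
    Finset.notMem_empty, iff_false]
  omega

theorem tailPathGraft_last_not_adj (n : ℕ) (u w : Fin n) :
    ¬ (tailPathGraft n (n - 1)).G.Adj u w := by
  change ¬ (tailPathGraph n (n - 1)).Adj u w
  rw [tailPathGraph_adj]
  omega

/-- Lemma 3.2: for every path `P` on `n ≥ 1` vertices there is a mark set `L_P`
such that the graft `(P, L_P)` has a local complementation minor consisting of a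
single isolated vertex with empty mark set.  Moreover, for `n ≥ 2` one may take
`L_P = {v₁, vₙ}` (the two leaves) and perform the local complementation deletions
successively at `v₁, v₂, …, v_{n-1}`, ending at the single vertex `vₙ` with empty
mark set. -/
theorem path_graft_isLCMinor_single_vertex (n : ℕ) (hn : 1 ≤ n) :
    (∃ (L : Finset (Fin n)) (Δ : Graft (Fin n)),
      (pathGraft n L).IsLCMinor Δ ∧ Δ.support.card = 1 ∧
      (∀ u w, ¬ Δ.G.Adj u w) ∧ Δ.L = ∅) ∧
    (∀ _h2 : 2 ≤ n,
      let L : Finset (Fin n) := {⟨0, by omega⟩, ⟨n - 1, by omega⟩}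
      let Δ : Graft (Fin n) :=
        (List.ofFn fun i : Fin (n - 1) => Fin.castLE (Nat.sub_le n 1) i).foldl
          Graft.lcd (pathGraft n L)
      (pathGraft n L).IsLCMinor Δ ∧ Δ.support = {⟨n - 1, by omega⟩} ∧
        Δ.L = ∅ ∧ ∀ u w, ¬ Δ.G.Adj u w) := by
  have hminor : (pathGraft n (tailPathGraft n 0).L).IsLCMinor (tailPathGraft n (n - 1)) := by
    rw [pathGraft_tailPathGraft_zero_L]
    exact tailPathGraft_isLCMinor n
  refine ⟨⟨_, _, hminor, by simp [tailPathGraft_last_support hn],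
    tailPathGraft_last_not_adj n, tailPathGraft_last_L n⟩, fun h2 => ?_⟩
  dsimp only
  rw [← tailPathGraft_zero_L h2, pathGraft_tailPathGraft_zero_L, foldl_lcd_tailPathGraft]
  exact ⟨tailPathGraft_isLCMinor n, tailPathGraft_last_support hn, tailPathGraft_last_L n,
    tailPathGraft_last_not_adj n⟩
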